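/- arXiv:1510.05572 — 2 statements merged into one kernel-verified Lean document; each statement's English description precedes it below -/
import Mathlib

section
/- For a deterministic environment assigning value: action α gives total discounted reward γ₁ (reward 1 at step 1 then the environment ends), and action β gives total discounted reward ε·γ₁ (reward ε at step 1, zero forever after), the iterative value function V (which takes the limit over infinite continuations of the semimeasure) assigns V(α) = 0 and V(β) = ε·γ₁/Γ₁, hence V(β) > V(α) while the β-policy receives strictly less ν-expected total discounted reward (ε·γ₁ < γ₁) than the α-policy, provided γ₁ > 0 and 0 < ε < 1. -/
/-- Reward values: percept `0` carries reward `0`, percept `1` reward `ε`,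
percept `2` reward `1`. -/
noncomputable def rval (ε : ℝ) : Fin 3 → ℝ := ![0, ε, 1]

open Classical in
/-- The adversarial deterministic semimeasure `ν` on reward prefixes
`r 0, …, r (m-1)` (as `Fin 3` codes) given the first action `a`
(`false` = α, `true` = β): action α gives reward `1` at step 1 and then the
environment ends; action β gives reward `ε` at step 1 and reward `0` forever. -/
noncomputable def nuEnv (a : Bool) (m : ℕ) (r : ℕ → Fin 3) : ℝ :=
  if a then (if r 0 = 1 ∧ ∀ k, 1 ≤ k → k < m → r k = 0 then 1 else 0)
  else (if m = 1 ∧ r 0 = 2 then 1 else 0)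

/-- The length-`m` partial sum of the iterative value:
`∑_{r_{1:m}} ν(r_{1:m} | a) · ∑_{i=1}^m γ_i r_i`. -/
noncomputable def iterSum (ε : ℝ) (γ : ℕ → ℝ) (a : Bool) (m : ℕ) : ℝ :=
  ∑ r : Fin m → Fin 3,
    nuEnv a m (fun i => if h : i < m then r ⟨i, h⟩ else 0) *
      ∑ i : Fin m, γ (i.1 + 1) * rval ε (r i)

lemma iterFalse (ε : ℝ) (γ : ℕ → ℝ) (m : ℕ) (hm : 2 ≤ m) :
    iterSum ε γ false m = 0 := by
  unfold iterSum
  apply Finset.sum_eq_zero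
  intro r _
  have : nuEnv false m (fun i => if h : i < m then r ⟨i, h⟩ else 0) = 0 := by
    simp [nuEnv]
    intro h; omega
  rw [this, zero_mul]

lemma iterTrue (ε : ℝ) (γ : ℕ → ℝ) (m : ℕ) (hm : 1 ≤ m) :
    iterSum ε γ true m = ε * γ 1 := by
  unfold iterSum
  set r₀ : Fin m → Fin 3 := fun i => if i.1 = 0 then 1 else 0 with hr₀
  rw [Finset.sum_eq_single r₀]
  · have h1 : nuEnv true m (fun i => if h : i < m then r₀ ⟨i, h⟩ else 0) = 1 := by
      simp only [nuEnv, if_true]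
      rw [if_pos]
      constructor
      · simp [hr₀]; omega
      · intro k hk hkm
        simp [hr₀, hkm]
        omega
    rw [h1, one_mul]
    rw [Finset.sum_eq_single ⟨0, hm⟩]
    · simp [hr₀, rval, mul_comm]
    · intro i _ hi
      have : r₀ i = 0 := by
        simp [hr₀]
        intro h
        exact absurd (Fin.ext h) hi
      rw [this]
      simp [rval]
    · intro h; exact absurd (Finset.mem_univ _) h
  · intro r _ hr
    have : nuEnv true m (fun i => if h : i < m then r ⟨i, h⟩ else 0) = 0 := by
      simp only [nuEnv, if_true]
      rw [if_neg]
      rintro ⟨h0, hk⟩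
      apply hr
      funext i
      rcases Nat.eq_zero_or_pos i.1 with h | h
      · have := h0
        rw [dif_pos (show 0 < m from hm)] at this
        have hi0 : i = ⟨0, hm⟩ := Fin.ext h
        rw [hi0]
        simp only [hr₀]
        simp
        convert this using 2
      · have := hk i.1 h i.2
        rw [dif_pos i.2] at this
        simp only [hr₀]
        rw [if_neg (by omega)]
        convert this using 2
    rw [this, zero_mul]
  · intro h; exact absurd (Finset.mem_univ _) h


open Filter in
/-- In the adversarial environment, the iterative value of action α is `0` and
that of action β is `ε·γ₁/Γ₁ > 0`, so iterative AINU prefers β, although the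
β-policy receives strictly less ν-expected total discounted reward
(`ε·γ₁ < γ₁`) than the α-policy. -/
theorem iterative_value_not_reward_maximizing
    (ε : ℝ) (hε : 0 < ε) (hε1 : ε < 1)
    (γ : ℕ → ℝ) (hγ : ∀ i, 0 ≤ γ i) (hs : Summable γ) (hγ1 : 0 < γ 1)
    (Γ1 : ℝ) (hΓ1 : Γ1 = ∑' i : ℕ, γ (1 + i)) :
    Tendsto (fun m => iterSum ε γ false m / Γ1) atTop (nhds 0) ∧
    Tendsto (fun m => iterSum ε γ true m / Γ1) atTop (nhds (ε * γ 1 / Γ1)) ∧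
    0 < ε * γ 1 / Γ1 ∧
    ε * γ 1 < γ 1 := by
  have hsum : Summable (fun i => γ (1 + i)) := by
    have := (summable_nat_add_iff 1).mpr hs
    simpa [add_comm] using this
  have hΓpos : 0 < Γ1 := by
    rw [hΓ1]
    calc (0:ℝ) < γ 1 := hγ1
    _ = γ (1 + 0) := by norm_num
    _ ≤ ∑' i, γ (1 + i) := Summable.le_tsum hsum 0 (fun j _ => hγ (1 + j))
  refine ⟨?_, ?_, ?_, ?_⟩
  · apply Tendsto.congr' _ tendsto_const_nhds
    filter_upwards [eventually_ge_atTop 2] with m hm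
    rw [iterFalse ε γ m hm, zero_div]
  · apply Tendsto.congr' _ tendsto_const_nhds
    filter_upwards [eventually_ge_atTop 1] with m hm
    rw [iterTrue ε γ m hm]
  · positivity
  · nlinarith
end

section
/- If ν is a measure (not just a semimeasure), then the iterative and recursive value functions coincide: for every policy π and history with Γ_t > 0, (1/Γ_t)·lim_{m→∞} Σ_{e_{t:m}} (Σ_{k=t}^m γ_k r_k)·ν(e_{1:m}|e_{<t}, a_{1:m}) = (1/Γ_t)·Σ_{m=t}^∞ Σ_{e_{t:m}} γ_m r_m·ν(e_{1:m}|e_{<t}, a_{1:m}). -/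
open Filter in
/-- For a measure `ν` (not merely a semimeasure) over percept sequences, the
iterative and recursive value functions coincide: writing `t = |h| + 1` for the
current time step, the limit over horizons `m → ∞` of
`(1/(ν(h)·Γ_t)) ∑_{e_{t:m}} (∑_{k=t}^m γ_k r_k) ν(h e_{t:m})`
equals `(1/(ν(h)·Γ_t)) ∑_{m=t}^∞ ∑_{e_{t:m}} γ_m r_m ν(h e_{t:m})`.
Continuations of length `n` are coded as `c : Fin n → E`, appended to `h`,
with `r_{t+k} = rwd (c k)`. -/
theorem iterative_eq_recursive_value_of_measure
    {E : Type*} [Fintype E] (ν : List E → ℝ)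
    (hnonneg : ∀ x, 0 ≤ ν x) (hroot : ν [] = 1)
    (hmeas : ∀ x : List E, ν x = ∑ e : E, ν (x ++ [e]))
    (rwd : E → ℝ) (hr : ∀ e, 0 ≤ rwd e ∧ rwd e ≤ 1)
    (γ : ℕ → ℝ) (hγ : ∀ i, 0 ≤ γ i) (hs : Summable γ)
    (Γ : ℕ → ℝ) (hΓ : ∀ u, Γ u = ∑' i : ℕ, γ (u + i))
    (h : List E) (t : ℕ) (ht : t = h.length + 1)
    (hΓt : 0 < Γ t) (hνh : 0 < ν h) :
    Tendsto
      (fun n : ℕ =>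
        (∑ c : Fin n → E,
            (∑ k : Fin n, γ (t + k.1) * rwd (c k)) * ν (h ++ List.ofFn c)) /
          (ν h * Γ t))
      atTop
      (nhds
        ((∑' n : ℕ, ∑ c : Fin (n + 1) → E,
            γ (t + n) * rwd (c (Fin.last n)) * ν (h ++ List.ofFn c)) /
          (ν h * Γ t))) := by
  set T : ℕ → ℝ := fun m =>
    ∑ c : Fin (m + 1) → E, γ (t + m) * rwd (c (Fin.last m)) * ν (h ++ List.ofFn c) with hT
  have hsnoc : ∀ (n : ℕ) (c : Fin n → E) (e : E),
      List.ofFn (Fin.snoc c e) = List.ofFn c ++ [e] := by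
    intro n c e
    rw [List.ofFn_succ', List.concat_eq_append]
    simp
  -- total mass lemma
  have hA : ∀ (n : ℕ), (∑ c : Fin n → E, ν (h ++ List.ofFn c)) = ν h := by
    intro n
    induction n with
    | zero => simp
    | succ n ih =>
      rw [← Equiv.sum_comp (Fin.snocEquiv (fun _ => E))
        (fun c => ν (h ++ List.ofFn c)), Fintype.sum_prod_type_right]
      calc (∑ c : Fin n → E, ∑ e : E, ν (h ++ List.ofFn ((Fin.snocEquiv fun _ => E) (e, c))))
          = ∑ c : Fin n → E, ν (h ++ List.ofFn c) := by
            refine Finset.sum_congr rfl fun c _ => ?_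
            rw [hmeas (h ++ List.ofFn c)]
            refine Finset.sum_congr rfl fun e _ => ?_
            congr 1
            simp only [Fin.snocEquiv, Equiv.coe_fn_mk]
            show h ++ List.ofFn (Fin.snoc c e) = h ++ List.ofFn c ++ [e]
            rw [hsnoc n c e, List.append_assoc]
        _ = ν h := ih
  -- partial sum identity
  have hS : ∀ n : ℕ,
      (∑ c : Fin n → E, (∑ k : Fin n, γ (t + k.1) * rwd (c k)) * ν (h ++ List.ofFn c))
        = ∑ m ∈ Finset.range n, T m := by
    intro n
    induction n with
    | zero => simp
    | succ n ih =>
      rw [Finset.sum_range_succ, ← ih]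
      have key : (∑ c : Fin (n + 1) → E,
          (∑ k : Fin (n + 1), γ (t + k.1) * rwd (c k)) * ν (h ++ List.ofFn c))
          = (∑ c : Fin (n + 1) → E,
              (∑ k : Fin n, γ (t + k.1) * rwd (c k.castSucc)) * ν (h ++ List.ofFn c))
            + T n := by
        rw [hT, ← Finset.sum_add_distrib]
        refine Finset.sum_congr rfl fun c _ => ?_
        rw [Fin.sum_univ_castSucc, add_mul]
        simp [Fin.coe_castSucc]
      rw [key]
      congr 1
      rw [← Equiv.sum_comp (Fin.snocEquiv (fun _ => E))
        (fun c => (∑ k : Fin n, γ (t + k.1) * rwd (c k.castSucc)) * ν (h ++ List.ofFn c)),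
        Fintype.sum_prod_type_right]
      refine Finset.sum_congr rfl fun c _ => ?_
      have hc : ∀ e : E, List.ofFn ((Fin.snocEquiv fun _ => E) (e, c))
          = List.ofFn c ++ [e] := by
        intro e
        simp only [Fin.snocEquiv, Equiv.coe_fn_mk]
        show List.ofFn (Fin.snoc c e) = List.ofFn c ++ [e]
        exact hsnoc n c e
      have hc2 : ∀ (e : E) (k : Fin n),
          ((Fin.snocEquiv fun _ => E) (e, c)) k.castSucc = c k := by
        intro e k; simp [Fin.snocEquiv, Fin.snoc_castSucc]
      calc (∑ e : E,
            (∑ k : Fin n, γ (t + k.1) * rwd (((Fin.snocEquiv fun _ => E) (e, c)) k.castSucc))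
              * ν (h ++ List.ofFn ((Fin.snocEquiv fun _ => E) (e, c))))
          = ∑ e : E, (∑ k : Fin n, γ (t + k.1) * rwd (c k)) * ν ((h ++ List.ofFn c) ++ [e]) := by
            refine Finset.sum_congr rfl fun e _ => ?_
            rw [hc e]
            simp [hc2 e, List.append_assoc]
        _ = (∑ k : Fin n, γ (t + k.1) * rwd (c k)) * ν (h ++ List.ofFn c) := by
            rw [← Finset.mul_sum, ← hmeas]
  -- summability of T
  have hTnonneg : ∀ m, 0 ≤ T m := by
    intro m
    refine Finset.sum_nonneg fun c _ => ?_
    exact mul_nonneg (mul_nonneg (hγ _) (hr _).1) (hnonneg _)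
  have hTle : ∀ m, T m ≤ γ (t + m) * ν h := by
    intro m
    rw [hT]
    calc (∑ c : Fin (m + 1) → E, γ (t + m) * rwd (c (Fin.last m)) * ν (h ++ List.ofFn c))
        ≤ ∑ c : Fin (m + 1) → E, γ (t + m) * ν (h ++ List.ofFn c) := by
          refine Finset.sum_le_sum fun c _ => ?_
          have := (hr (c (Fin.last m))).2
          have h1 : γ (t + m) * rwd (c (Fin.last m)) ≤ γ (t + m) * 1 :=
            mul_le_mul_of_nonneg_left this (hγ _)
          calc γ (t + m) * rwd (c (Fin.last m)) * ν (h ++ List.ofFn c)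
              ≤ γ (t + m) * 1 * ν (h ++ List.ofFn c) :=
                mul_le_mul_of_nonneg_right h1 (hnonneg _)
            _ = γ (t + m) * ν (h ++ List.ofFn c) := by ring
      _ = γ (t + m) * ν h := by rw [← Finset.mul_sum, hA]
  have hγshift : Summable fun m => γ (t + m) := by
    have := (summable_nat_add_iff t).2 hs
    simpa [add_comm] using this
  have hTsummable : Summable T :=
    Summable.of_nonneg_of_le hTnonneg hTle (hγshift.mul_right (ν h))
  have hfin := (hTsummable.hasSum.tendsto_sum_nat).div_const (ν h * Γ t)
  have heq : (fun n : ℕ =>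
      (∑ c : Fin n → E,
          (∑ k : Fin n, γ (t + k.1) * rwd (c k)) * ν (h ++ List.ofFn c)) / (ν h * Γ t))
      = fun n : ℕ => (∑ m ∈ Finset.range n, T m) / (ν h * Γ t) := by
    funext n; rw [hS n]
  rw [heq]
  exact hfin
end
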